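/- arXiv:1702.07612 — 5 statements merged into one kernel-verified Lean document; each statement's English description precedes it below -/
import Mathlib

section
/- Let ε be a minimum-weight feedback arc set of a positively arc-weighted digraph (G,ω) and let e ∈ E. Then ε contains at most one arc from the Γ-equivalence class of e (arcs lying on a common branch-point-free directed path through e), and if ε meets this class, the chosen arc minimizes ω on the class. -/
/-- A directed cycle of a digraph given by `tail`/`head` maps. -/
def IsCycle {V E : Type*} (tail head : E → V) {n : ℕ} (c : Fin (n + 1) → E) : Prop :=
  ∀ i, head (c i) = tail (c (i + 1))

/-- `ε` is a feedback arc set: removing its arcs leaves no directed cycle. -/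
def IsFAS {V E : Type*} (tail head : E → V) (ε : Set E) : Prop :=
  ¬ ∃ (n : ℕ) (c : Fin (n + 1) → E), IsCycle tail head c ∧ ∀ i, c i ∉ ε

/-- `ε` is a minimum-weight feedback arc set. -/
def IsOptFAS {V E : Type*} (tail head : E → V) (ω : E → ℝ) (ε : Finset E) : Prop :=
  IsFAS tail head ↑ε ∧
    ∀ ε' : Finset E, IsFAS tail head ↑ε' → ∑ x ∈ ε, ω x ≤ ∑ x ∈ ε', ω x

/-- Γ-equivalence: `e = f`, or `e` and `f` are the first and last arcs of a directed
path all of whose internal vertices have indegree 1 and outdegree 1. -/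
def GammaEquiv {V E : Type*} (tail head : E → V) (e f : E) : Prop :=
  e = f ∨ ∃ (m : ℕ) (p : Fin (m + 1) → E),
    (∀ i : Fin m, head (p i.castSucc) = tail (p i.succ)) ∧
    ((p 0 = e ∧ p (Fin.last m) = f) ∨ (p 0 = f ∧ p (Fin.last m) = e)) ∧
    (∀ i : Fin m,
      Nat.card {g : E // head g = head (p i.castSucc)} = 1 ∧
      Nat.card {g : E // tail g = head (p i.castSucc)} = 1)

/-! Exchanging an arc of a feedback arc set for an arc lying on the same directed cycles
yields a feedback arc set again, and arcs joined by a path through vertices of indegree and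
outdegree 1 lie on the same cycles. Hence an optimal feedback arc set can neither hold two arcs
of a Γ-class (drop one of them) nor an arc of a Γ-class heavier than another one (swap them). -/

theorem Finset.sum_insert_le_add {ι M : Type*} [DecidableEq ι] [AddCommMonoid M] [Preorder M]
    [AddLeftMono M] (s : Finset ι) {a : ι} {f : ι → M} (ha : 0 ≤ f a) :
    ∑ x ∈ insert a s, f x ≤ f a + ∑ x ∈ s, f x := by
  by_cases has : a ∈ s
  · rw [Finset.insert_eq_of_mem has]
    exact le_add_of_nonneg_left ha
  · rw [Finset.sum_insert has]

theorem eq_of_nat_card_subtype_eq_one {α : Type*} {P : α → Prop}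
    (h : Nat.card {x // P x} = 1) {a b : α} (ha : P a) (hb : P b) : a = b :=
  have := (Nat.card_eq_one_iff_unique.mp h).1
  congrArg Subtype.val (Subsingleton.elim (⟨a, ha⟩ : {x // P x}) ⟨b, hb⟩)

section Digraph

variable {V E : Type*} {tail head : E → V}

def SameCycles (tail head : E → V) (e f : E) : Prop :=
  ∀ ⦃n : ℕ⦄ {c : Fin (n + 1) → E}, IsCycle tail head c → (e ∈ Set.range c ↔ f ∈ Set.range c)

theorem IsCycle.mem_range_iff_of_degree_eq_one {n : ℕ} {c : Fin (n + 1) → E}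
    (hc : IsCycle tail head c) {a b : E} (hab : head a = tail b)
    (hin : Nat.card {g : E // head g = head a} = 1)
    (hout : Nat.card {g : E // tail g = head a} = 1) :
    a ∈ Set.range c ↔ b ∈ Set.range c := by
  constructor
  · rintro ⟨i, rfl⟩
    exact ⟨i + 1, eq_of_nat_card_subtype_eq_one hout (hc i).symm hab.symm⟩
  · rintro ⟨i, rfl⟩
    refine ⟨i - 1, eq_of_nat_card_subtype_eq_one hin ?_ rfl⟩
    rw [hc, sub_add_cancel, hab]

theorem GammaEquiv.sameCycles {e f : E} (h : GammaEquiv tail head e f) :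
    SameCycles tail head e f := by
  intro n c hc
  rcases h with rfl | ⟨m, p, hpath, hends, hdeg⟩
  · rfl
  have hstep (k : Fin m) : p k.castSucc ∈ Set.range c ↔ p k.succ ∈ Set.range c :=
    hc.mem_range_iff_of_degree_eq_one (hpath k) (hdeg k).1 (hdeg k).2
  have hends_iff : p 0 ∈ Set.range c ↔ p (Fin.last m) ∈ Set.range c :=
    Fin.induction (motive := fun k => p 0 ∈ Set.range c ↔ p k ∈ Set.range c)
      Iff.rfl (fun k ih => ih.trans (hstep k)) (Fin.last m)
  rcases hends with ⟨rfl, rfl⟩ | ⟨rfl, rfl⟩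
  · exact hends_iff
  · exact hends_iff.symm

theorem IsFAS.exchange [DecidableEq E] {ε : Finset E} (hε : IsFAS tail head ↑ε)
    {f g : E} (hfg : SameCycles tail head f g) :
    IsFAS tail head ↑(insert g (ε.erase f)) := by
  rintro ⟨n, c, hc, hav⟩
  refine hε ⟨n, c, hc, fun i hi => ?_⟩
  by_cases hif : c i = f
  · obtain ⟨j, hj⟩ := (hfg hc).mp ⟨i, hif⟩
    exact hav j (by simp [hj])
  · exact hav i (by simp [hif, hi])

end Digraph

theorem optFAS_gamma_class_general {V E : Type*}
    (tail head : E → V) (ω : E → ℝ) (hω : ∀ e, 0 < ω e)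
    (ε : Finset E) (hopt : IsOptFAS tail head ω ε) (e : E) :
    (∀ f ∈ ε, ∀ g ∈ ε, GammaEquiv tail head e f → GammaEquiv tail head e g → f = g) ∧
    (∀ f ∈ ε, GammaEquiv tail head e f →
      ∀ g, GammaEquiv tail head e g → ω f ≤ ω g) := by
  classical
  obtain ⟨hfas, hmin⟩ := hopt
  have hexchange : ∀ f g, GammaEquiv tail head e f → GammaEquiv tail head e g →
      ∑ x ∈ ε, ω x ≤ ∑ x ∈ insert g (ε.erase f), ω x := fun f g hef heg =>
    hmin _ (hfas.exchange fun _ _ hc => (hef.sameCycles hc).symm.trans (heg.sameCycles hc))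
  have hsplit : ∀ f ∈ ε, ∑ x ∈ ε.erase f, ω x + ω f = ∑ x ∈ ε, ω x :=
    fun f hf => Finset.sum_erase_add ε ω hf
  refine ⟨fun f hf g hg hef heg => ?_, fun f hf hef g heg => ?_⟩
  · by_contra hne
    have hle := hexchange f g hef heg
    rw [Finset.insert_eq_of_mem (Finset.mem_erase.mpr ⟨Ne.symm hne, hg⟩)] at hle
    linarith [hsplit f hf, hω f]
  · have hle := hexchange f g hef heg
    linarith [hsplit f hf, (ε.erase f).sum_insert_le_add (hω g).le]

/-- A minimum-weight feedback arc set of a positively weighted digraph contains at most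
one arc from the Γ-equivalence class of any arc `e`, and an arc it contains from that
class minimizes the weight on the class. -/
theorem optFAS_gamma_class {V E : Type*} [Fintype V] [Fintype E]
    (tail head : E → V) (ω : E → ℝ) (hω : ∀ e, 0 < ω e)
    (ε : Finset E) (hopt : IsOptFAS tail head ω ε) (e : E) :
    (∀ f ∈ ε, ∀ g ∈ ε, GammaEquiv tail head e f → GammaEquiv tail head e g → f = g) ∧
    (∀ f ∈ ε, GammaEquiv tail head e f →
      ∀ g, GammaEquiv tail head e g → ω f ≤ ω g) :=
  optFAS_gamma_class_general tail head ω hω ε hopt e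
end

section
/- If two arcs e, f of a digraph G lie on exactly the same set of elementary directed cycles, then the minimum feedback weight of G with e removed equals the minimum feedback weight of G with f removed: Ω(G\e, ω) = Ω(G\f, ω). -/
/-- An elementary cycle: a directed cycle visiting each vertex it contains exactly once. -/
def IsElemCycle {V E : Type*} (tail head : E → V) {n : ℕ} (c : Fin (n + 1) → E) : Prop :=
  IsCycle tail head c ∧ Function.Injective (fun i => tail (c i))

/-- The minimum feedback weight `Ω(G\e, ω)` of the graph with the arc `e` removed:
the infimum of the weights of arc sets `ε` (not containing `e`) such that `ε ∪ {e}`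
cuts all cycles of `G`. -/
noncomputable def delFeedbackWeight {V E : Type*} (tail head : E → V) (ω : E → ℝ)
    (e : E) : ℝ :=
  sInf {w : ℝ | ∃ ε : Finset E, e ∉ ε ∧ IsFAS tail head (↑ε ∪ {e}) ∧ w = ∑ x ∈ ε, ω x}

/-- Every directed cycle contains an elementary directed cycle all of whose arcs
come from the original cycle. -/
lemma exists_elem_subcycle {V E : Type*} [Fintype V] (tail head : E → V) {n : ℕ}
    (c : Fin (n + 1) → E) (hc : IsCycle tail head c) :
    ∃ (m : ℕ) (c' : Fin (m + 1) → E), IsElemCycle tail head c' ∧ ∀ j, ∃ i, c' j = c i := by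
  classical
  set pick : V → Fin (n + 1) := fun v => if h : ∃ j, tail (c j) = v then h.choose else 0
    with hpickdef
  have hpick_spec : ∀ v, (∃ j, tail (c j) = v) → tail (c (pick v)) = v := by
    intro v h
    simp only [hpickdef, dif_pos h]
    exact h.choose_spec
  set g : V → V := fun v => head (c (pick v)) with hgdef
  set v : ℕ → V := fun k => g^[k] (tail (c 0)) with hvdef
  have hvsucc : ∀ k, v (k + 1) = head (c (pick (v k))) := by
    intro k
    simp only [hvdef]
    rw [Function.iterate_succ_apply']
  have hvT : ∀ k, ∃ j, tail (c j) = v k := by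
    intro k
    induction k with
    | zero => exact ⟨0, rfl⟩
    | succ k _ =>
      refine ⟨pick (v k) + 1, ?_⟩
      rw [hvsucc k, ← hc (pick (v k))]
  have htail : ∀ k, tail (c (pick (v k))) = v k := fun k => hpick_spec _ (hvT k)
  -- find the first repetition
  have hP : ∃ l, ∃ k < l, v k = v l := by
    obtain ⟨a, b, hab, hvab⟩ := Finite.exists_ne_map_eq_of_infinite v
    rcases lt_or_gt_of_ne hab with h | h
    · exact ⟨b, a, h, hvab⟩
    · exact ⟨a, b, h, hvab.symm⟩
  set l := Nat.find hP with hldef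
  obtain ⟨k, hkl, hvkl⟩ := Nat.find_spec hP
  have hinj : ∀ a b, a < l → b < l → v a = v b → a = b := by
    intro a b ha hb hab
    by_contra hne
    rcases lt_or_gt_of_ne hne with h | h
    · exact Nat.find_min hP hb ⟨a, h, hab⟩
    · exact Nat.find_min hP ha ⟨b, h, hab.symm⟩
  set m := l - k - 1 with hmdef
  have hm1 : m + 1 = l - k := by omega
  refine ⟨m, fun j => c (pick (v (k + j.val))), ⟨?_, ?_⟩, fun j => ⟨_, rfl⟩⟩
  · -- IsCycle
    intro j
    rw [htail (k + (j + 1).val), ← hvsucc (k + j.val)]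
    have hjv : ((j + 1 : Fin (m + 1))).val = (j.val + 1) % (m + 1) := by
      simp [Fin.add_def]
    rcases eq_or_lt_of_le (Nat.lt_succ_iff.mp j.isLt) with hj | hj
    · -- j.val = m, wrap around
      have h0 : ((j + 1 : Fin (m + 1))).val = 0 := by
        rw [hjv, hj]
        simp
      rw [h0]
      have h1 : k + j.val + 1 = l := by omega
      rw [Nat.add_zero, h1]
      exact hvkl.symm
    · have h1 : ((j + 1 : Fin (m + 1))).val = j.val + 1 := by
        rw [hjv]
        exact Nat.mod_eq_of_lt (by omega)
      rw [h1, Nat.add_assoc]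
  · -- injective tails
    intro a b hab
    simp only [htail] at hab
    have ha : k + a.val < l := by have := a.isLt; omega
    have hb : k + b.val < l := by have := b.isLt; omega
    have := hinj _ _ ha hb hab
    exact Fin.ext (by omega)

lemma delFeedbackWeight_le_of_same_cycles {V E : Type*} [Fintype V] [Fintype E]
    (tail head : E → V) (ω : E → ℝ) (hω : ∀ e, 0 < ω e) (e f : E)
    (hsame : ∀ (n : ℕ) (c : Fin (n + 1) → E), IsElemCycle tail head c →
      ((∃ i, c i = e) → (∃ i, c i = f))) :
    delFeedbackWeight tail head ω f ≤ delFeedbackWeight tail head ω e := by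
  classical
  set Se := {w : ℝ | ∃ ε : Finset E, e ∉ ε ∧ IsFAS tail head (↑ε ∪ {e}) ∧ w = ∑ x ∈ ε, ω x}
  set Sf := {w : ℝ | ∃ ε : Finset E, f ∉ ε ∧ IsFAS tail head (↑ε ∪ {f}) ∧ w = ∑ x ∈ ε, ω x}
  have hbdd : BddBelow Sf := by
    refine ⟨0, ?_⟩
    rintro w ⟨ε, -, -, rfl⟩
    exact Finset.sum_nonneg fun x _ => (hω x).le
  have hne : Se.Nonempty := by
    refine ⟨∑ x ∈ Finset.univ.erase e, ω x, Finset.univ.erase e, by simp, ?_, rfl⟩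
    rintro ⟨n, c, hc, hmem⟩
    have := hmem 0
    simp only [Set.mem_union, Finset.coe_erase, Set.mem_diff, Set.mem_singleton_iff,
      Finset.coe_univ, Set.mem_univ, true_and, not_or, not_not] at this
    tauto
  refine le_csInf hne ?_
  rintro w ⟨ε, -, hfas, rfl⟩
  have hw' : (∑ x ∈ ε.erase f, ω x) ∈ Sf := by
    refine ⟨ε.erase f, Finset.notMem_erase f ε, ?_, rfl⟩
    rintro ⟨n, c, hc, hmem⟩
    obtain ⟨m, c', hc', hsub⟩ := exists_elem_subcycle tail head c hc
    have hmem' : ∀ j, (c' j : E) ∉ (↑(ε.erase f) : Set E) ∪ {f} := by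
      intro j
      obtain ⟨i, hi⟩ := hsub j
      rw [hi]
      exact hmem i
    have hnf : ∀ j, c' j ≠ f := by
      intro j hj
      exact hmem' j (Or.inr hj)
    have hne' : ∀ j, c' j ≠ e := by
      intro j hj
      obtain ⟨j', hj'⟩ := hsame m c' hc' ⟨j, hj⟩
      exact hnf j' hj'
    refine hfas ⟨m, c', hc'.1, fun j => ?_⟩
    rintro (hj | hj)
    · have hj' : c' j ∈ ε.erase f := Finset.mem_erase.mpr ⟨hnf j, hj⟩
      exact hmem' j (Or.inl (by exact_mod_cast hj'))
    · exact hne' j hj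
  calc sInf Sf ≤ ∑ x ∈ ε.erase f, ω x := csInf_le hbdd hw'
    _ ≤ ∑ x ∈ ε, ω x :=
      Finset.sum_le_sum_of_subset_of_nonneg (Finset.erase_subset f ε)
        (fun x _ _ => (hω x).le)

/-- If two arcs `e`, `f` lie on exactly the same elementary directed cycles, then the
minimum feedback weight of `G` with `e` removed equals that of `G` with `f` removed. -/
theorem delFeedbackWeight_eq_of_same_cycles {V E : Type*} [Fintype V] [Fintype E]
    (tail head : E → V) (ω : E → ℝ) (hω : ∀ e, 0 < ω e) (e f : E)
    (hsame : ∀ (n : ℕ) (c : Fin (n + 1) → E), IsElemCycle tail head c →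
      ((∃ i, c i = e) ↔ (∃ i, c i = f))) :
    delFeedbackWeight tail head ω e = delFeedbackWeight tail head ω f := by
  refine le_antisymm ?_ ?_
  · exact delFeedbackWeight_le_of_same_cycles tail head ω hω f e
      (fun n c hc => (hsame n c hc).mpr)
  · exact delFeedbackWeight_le_of_same_cycles tail head ω hω e f
      (fun n c hc => (hsame n c hc).mp)
end

section
/- Any digraph G' with at least one directed cycle but no isolated cycles satisfies |V'| + |E'| ≥ 9, and the directed 3-clique D_3 (3 vertices with both arcs between every pair, so |V|=3, |E|=6) attains this bound; moreover D_3 has no isolated cycle, i.e., every elementary cycle of D_3 meets some other elementary cycle not sharing a common arc with it in the sense of the definition. -/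
/-- `e` is an isolating arc of the elementary cycle `c`: `e` lies on `c` and `c` is
arc-disjoint from every elementary cycle containing neither `e` nor an arc parallel
to `e`. -/
def IsolatingArc {V E : Type*} (tail head : E → V) {n : ℕ} (c : Fin (n + 1) → E)
    (e : E) : Prop :=
  e ∈ Set.range c ∧
    ∀ (m : ℕ) (c' : Fin (m + 1) → E), IsElemCycle tail head c' →
      (∀ i, ¬ (tail (c' i) = tail e ∧ head (c' i) = head e)) →
      Disjoint (Set.range c) (Set.range c')

/-- A graph has an isolated cycle iff some elementary cycle has an isolating arc. -/
def HasIsolatedCycle {V E : Type*} (tail head : E → V) : Prop :=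
  ∃ (n : ℕ) (c : Fin (n + 1) → E), IsElemCycle tail head c ∧ ∃ e, IsolatingArc tail head c e

/-- Arc type of the complete digraph `D₃` on three vertices. -/
def D3E := {p : Fin 3 × Fin 3 // p.1 ≠ p.2}

instance : Fintype D3E := by unfold D3E; infer_instance

def d3tail : D3E → Fin 3 := fun e => e.val.1
def d3head : D3E → Fin 3 := fun e => e.val.2

/-!
A loop is always an isolated cycle, so a digraph without isolated cycles is loop-free, and for
every arc `e` of an elementary cycle `c` some elementary cycle avoiding `e` and its parallels
shares an arc with `c`. Such a cycle cannot stay on `c` (once it enters `c` it has to follow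
`c`), so it contributes an arc outside `c`.

If there is a `2`-cycle `u ⇄ v`, the cycles avoiding its two arcs supply an arc out of `u` not
to `v`, an arc into `v` not from `u` and symmetrically, so `|E| ≥ 6` and `|V| ≥ 3`. Otherwise
a shortest cycle has length `k ≥ 3`, hence `|V| ≥ k` and `|E| ≥ k + 1`; for `k = 3`, three
vertices or four arcs would leave no room for a cycle avoiding an arc of the triangle.
-/

open Fin.NatCast in
theorem Fin.forall_of_add_one_closed {n : ℕ} {P : Fin (n + 1) → Prop} {i₀ : Fin (n + 1)}
    (h₀ : P i₀) (hstep : ∀ i, P i → P (i + 1)) (i : Fin (n + 1)) : P i := by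
  have hshift : ∀ r : ℕ, P (i₀ + r) := by
    intro r
    induction r with
    | zero => simpa using h₀
    | succ r ih => simpa [Nat.cast_succ, add_assoc] using hstep _ ih
  simpa using hshift (i - i₀).val

section Cycles

variable {V E : Type*}

def AvoidsParallel (tail head : E → V) {m : ℕ} (d : Fin (m + 1) → E) (e : E) : Prop :=
  ∀ k, ¬ (tail (d k) = tail e ∧ head (d k) = head e)

variable {tail head : E → V}

theorem AvoidsParallel.ne {m : ℕ} {d : Fin (m + 1) → E} {e : E}
    (h : AvoidsParallel tail head d e) (k : Fin (m + 1)) : d k ≠ e :=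
  fun hk => h k ⟨congrArg tail hk, congrArg head hk⟩

theorem IsElemCycle.injective {n : ℕ} {c : Fin (n + 1) → E} (hc : IsElemCycle tail head c) :
    Function.Injective c :=
  fun _ _ h => hc.2 (congrArg tail h)

theorem IsElemCycle.card_le [Fintype V] {n : ℕ} {c : Fin (n + 1) → E}
    (hc : IsElemCycle tail head c) : n + 1 ≤ Fintype.card V := by
  simpa using Fintype.card_le_of_injective _ hc.2

theorem IsElemCycle.add_two_le_card_of_notMem [Fintype E] {n : ℕ} {c : Fin (n + 1) → E}
    (hc : IsElemCycle tail head c) {f : E} (hf : f ∉ Set.range c) :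
    n + 2 ≤ Fintype.card E := by
  simpa [Nat.succ_le_iff] using Fintype.card_lt_of_injective_of_notMem c hc.injective hf

theorem IsElemCycle.eq_add_one_of_mem_range {n m : ℕ} {c : Fin (n + 1) → E}
    {d : Fin (m + 1) → E} (hc : IsElemCycle tail head c) (hd : IsCycle tail head d)
    {i : Fin (n + 1)} {j : Fin (m + 1)} (hji : d j = c i) (hmem : d (j + 1) ∈ Set.range c) :
    d (j + 1) = c (i + 1) := by
  obtain ⟨k, hk⟩ := hmem
  have : tail (c k) = tail (c (i + 1)) := by rw [hk, ← hd j, hji, hc.1 i]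
  rw [← hk, hc.2 this]

theorem IsElemCycle.mem_range_of_range_subset {n m : ℕ} {c : Fin (n + 1) → E}
    {d : Fin (m + 1) → E} (hc : IsElemCycle tail head c) (hd : IsCycle tail head d)
    (hsub : Set.range d ⊆ Set.range c) (i : Fin (n + 1)) : c i ∈ Set.range d := by
  obtain ⟨i₀, hi₀⟩ := hsub ⟨0, rfl⟩
  refine Fin.forall_of_add_one_closed (P := fun i => c i ∈ Set.range d) ⟨0, hi₀.symm⟩ ?_ i
  rintro i ⟨j, hj⟩
  exact ⟨j + 1, hc.eq_add_one_of_mem_range hd hj (hsub ⟨_, rfl⟩)⟩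

theorem IsElemCycle.exists_notMem_range_of_avoidsParallel {n m : ℕ} {c : Fin (n + 1) → E}
    {d : Fin (m + 1) → E} (hc : IsElemCycle tail head c) (hd : IsCycle tail head d)
    {i : Fin (n + 1)} (havoid : AvoidsParallel tail head d (c i)) :
    ∃ k, d k ∉ Set.range c := by
  by_contra! hsub
  obtain ⟨k, hk⟩ := hc.mem_range_of_range_subset hd (Set.range_subset_iff.2 hsub) i
  exact havoid.ne k hk

theorem not_isolatingArc_iff {n : ℕ} {c : Fin (n + 1) → E} {e : E} (he : e ∈ Set.range c) :
    ¬ IsolatingArc tail head c e ↔ ∃ (m : ℕ) (d : Fin (m + 1) → E),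
      IsElemCycle tail head d ∧ AvoidsParallel tail head d e ∧ ∃ j i, d j = c i := by
  simp only [IsolatingArc, he, true_and, not_forall, Set.not_disjoint_iff, exists_prop]
  constructor
  · rintro ⟨m, d, hd, havoid, -, ⟨i, rfl⟩, j, hj⟩
    exact ⟨m, d, hd, havoid, j, i, hj⟩
  · rintro ⟨m, d, hd, havoid, j, i, hj⟩
    exact ⟨m, d, hd, havoid, c i, ⟨i, rfl⟩, j, hj⟩

theorem exists_avoidsParallel_of_not_hasIsolatedCycle (hni : ¬ HasIsolatedCycle tail head)
    {n : ℕ} {c : Fin (n + 1) → E} (hc : IsElemCycle tail head c) (i : Fin (n + 1)) :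
    ∃ (m : ℕ) (d : Fin (m + 1) → E),
      IsElemCycle tail head d ∧ AvoidsParallel tail head d (c i) ∧ ∃ j l, d j = c l :=
  (not_isolatingArc_iff ⟨i, rfl⟩).1 fun h => hni ⟨n, c, hc, c i, h⟩

theorem tail_ne_head_of_not_hasIsolatedCycle (hni : ¬ HasIsolatedCycle tail head) (e : E) :
    tail e ≠ head e := by
  intro hloop
  have hc : IsElemCycle tail head (fun _ : Fin 1 => e) :=
    ⟨fun _ => hloop.symm, fun _ _ _ => Subsingleton.elim (α := Fin 1) _ _⟩
  obtain ⟨_, d, -, havoid, j, -, hj⟩ := exists_avoidsParallel_of_not_hasIsolatedCycle hni hc 0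
  exact havoid.ne j hj

theorem add_two_le_card_of_not_hasIsolatedCycle [Fintype E]
    (hni : ¬ HasIsolatedCycle tail head) {n : ℕ} {c : Fin (n + 1) → E}
    (hc : IsElemCycle tail head c) : n + 2 ≤ Fintype.card E := by
  obtain ⟨_, d, hd, havoid, -⟩ := exists_avoidsParallel_of_not_hasIsolatedCycle hni hc 0
  obtain ⟨k, hk⟩ := hc.exists_notMem_range_of_avoidsParallel hd.1 havoid
  exact hc.add_two_le_card_of_notMem hk

end Cycles

section TwoCycles

variable {V E : Type*} {tail head : E → V}

theorem exists_detour_of_two_cycle (hni : ¬ HasIsolatedCycle tail head) {c : Fin 2 → E}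
    (hc : IsElemCycle tail head c) (i : Fin 2) :
    ∃ a b : E, tail a = tail (c i) ∧ head a ≠ head (c i) ∧
      head b = head (c i) ∧ tail b ≠ tail (c i) := by
  obtain ⟨m, d, hd, havoid, j, l, hjl⟩ := exists_avoidsParallel_of_not_hasIsolatedCycle hni hc i
  obtain rfl : l = i + 1 := by
    have hli : l ≠ i := by rintro rfl; exact havoid.ne j hjl
    exact (by decide : ∀ i l : Fin 2, l ≠ i → l = i + 1) i l hli
  have hback : head (c (i + 1)) = tail (c i) := by
    simpa [add_assoc, Fin.reduceAdd] using hc.1 (i + 1)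
  have hout : tail (d (j + 1)) = tail (c i) := by rw [← hd.1 j, hjl, hback]
  have hin : head (d (j - 1)) = head (c i) := by rw [hd.1 (j - 1), sub_add_cancel, hjl, hc.1 i]
  exact ⟨d (j + 1), d (j - 1), hout, fun h => havoid (j + 1) ⟨hout, h⟩, hin,
    fun h => havoid (j - 1) ⟨h, hin⟩⟩

theorem nine_le_card_add_card_of_two_cycle [Fintype V] [Fintype E]
    (hni : ¬ HasIsolatedCycle tail head) {c : Fin 2 → E} (hc : IsElemCycle tail head c) :
    9 ≤ Fintype.card V + Fintype.card E := by
  have hloop := tail_ne_head_of_not_hasIsolatedCycle hni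
  have huv : tail (c 0) ≠ tail (c 1) := fun h => absurd (hc.2 h) (by decide)
  have hc0 : head (c 0) = tail (c 1) := hc.1 0
  have hc1 : head (c 1) = tail (c 0) := hc.1 1
  obtain ⟨a, b, ha, ha', hb, hb'⟩ := exists_detour_of_two_cycle hni hc 0
  obtain ⟨p, q, hp, hp', hq, hq'⟩ := exists_detour_of_two_cycle hni hc 1
  have hV : 3 ≤ Fintype.card V :=
    List.Nodup.length_le_card (l := [tail (c 0), tail (c 1), head a]) (by
      simp only [List.nodup_cons, List.mem_cons, List.not_mem_nil, or_false, not_or]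
      and_intros <;> grind)
  have hE : 6 ≤ Fintype.card E :=
    List.Nodup.length_le_card (l := [c 0, c 1, a, b, p, q]) (by
      simp only [List.nodup_cons, List.mem_cons, List.not_mem_nil, or_false, not_or]
      and_intros <;> grind)
  omega

end TwoCycles

section ThreeCycles

variable {V E : Type*} {tail head : E → V}

theorem IsElemCycle.two_le (hloop : ∀ e, tail e ≠ head e)
    (h2 : ¬ ∃ d : Fin 2 → E, IsElemCycle tail head d) {m : ℕ} {d : Fin (m + 1) → E}
    (hd : IsElemCycle tail head d) : 2 ≤ m := by
  rcases m with _ | _ | m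
  · exact absurd (hd.1 0).symm (hloop (d 0))
  · exact absurd ⟨d, hd⟩ h2
  · omega

theorem not_avoidsParallel_of_card_eq_three [Fintype V] (hV : Fintype.card V = 3)
    {c d : Fin 3 → E} (hc : IsElemCycle tail head c) (hd : IsElemCycle tail head d)
    {j l : Fin 3} (hjl : d j = c l) (i : Fin 3) : ¬ AvoidsParallel tail head d (c i) := by
  have hsurj : Function.Surjective (fun k => tail (c k)) :=
    ((Fintype.bijective_iff_injective_and_card _).2 ⟨hc.2, by simp [hV]⟩).2
  have h1 : tail (d (j + 1)) = tail (c (l + 1)) := by rw [← hd.1, hjl, hc.1]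
  have htail : ∀ r : Fin 3, tail (d (j + r)) = tail (c (l + r)) := by
    intro r
    fin_cases r
    · simpa using congrArg tail hjl
    · exact h1
    · obtain ⟨k, hk⟩ := hsurj (tail (d (j + 2)))
      have hkl : k ≠ l := by
        rintro rfl
        exact (by decide : ∀ j : Fin 3, j + 2 ≠ j) j
          (hd.2 (hk.symm.trans (congrArg tail hjl).symm))
      have hkl1 : k ≠ l + 1 := by
        rintro rfl
        exact (by decide : ∀ j : Fin 3, j + 2 ≠ j + 1) j (hd.2 (hk.symm.trans h1.symm))
      have hk2 : k = l + 2 :=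
        (by decide : ∀ k l : Fin 3, k ≠ l → k ≠ l + 1 → k = l + 2) k l hkl hkl1
      show tail (d (j + 2)) = tail (c (l + 2))
      rw [← hk, hk2]
  intro havoid
  refine havoid (j + (i - l)) ⟨by rw [htail, add_sub_cancel], ?_⟩
  rw [hd.1, add_assoc, htail, ← add_assoc, add_sub_cancel, hc.1]

theorem four_le_card_of_three_cycle [Fintype V] (hni : ¬ HasIsolatedCycle tail head)
    (h2 : ¬ ∃ d : Fin 2 → E, IsElemCycle tail head d) {c : Fin 3 → E}
    (hc : IsElemCycle tail head c) : 4 ≤ Fintype.card V := by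
  by_contra! hlt
  have hV : Fintype.card V = 3 := le_antisymm (by omega) hc.card_le
  obtain ⟨m, d, hd, havoid, j, l, hjl⟩ := exists_avoidsParallel_of_not_hasIsolatedCycle hni hc 0
  obtain rfl : m = 2 := le_antisymm (by have := hd.card_le; omega)
    (hd.two_le (tail_ne_head_of_not_hasIsolatedCycle hni) h2)
  exact not_avoidsParallel_of_card_eq_three hV hc hd hjl 0 havoid

theorem not_avoidsParallel_of_forall_eq_or_eq_or_eq {c d : Fin 3 → E}
    (hc : IsElemCycle tail head c) (hd : IsElemCycle tail head d) {f : E}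
    (hsub : ∀ k, d k = c 0 ∨ d k = c 1 ∨ d k = f) : ¬ AvoidsParallel tail head d (c 2) := by
  classical
  intro havoid
  have himage : Finset.univ.image d = {c 0, c 1, f} := by
    refine Finset.eq_of_subset_of_card_le (fun g hg => ?_) ?_
    · obtain ⟨k, -, rfl⟩ := Finset.mem_image.1 hg
      rcases hsub k with h | h | h <;> simp [h]
    · rw [Finset.card_image_of_injective _ hd.injective]
      exact Finset.card_le_three
  obtain ⟨j, -, hj⟩ :=
    Finset.mem_image.1 (himage ▸ (by simp : c 1 ∈ ({c 0, c 1, f} : Finset E)))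
  have hnext : d (j + 1) = f := by
    have hout : d (j + 1) ∉ Set.range c :=
      fun hmem => havoid.ne _ (hc.eq_add_one_of_mem_range hd.1 hj hmem)
    rcases hsub (j + 1) with h | h | h
    all_goals first | exact h | exact absurd ⟨_, h.symm⟩ hout
  have hlast : d (j + 2) = c 0 := by
    rcases hsub (j + 2) with h | h | h
    · exact h
    · exact absurd (hd.injective (h.trans hj.symm)) ((by decide : ∀ j : Fin 3, j + 2 ≠ j) j)
    · exact absurd (hd.injective (h.trans hnext.symm))
        ((by decide : ∀ j : Fin 3, j + 2 ≠ j + 1) j)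
  refine havoid (j + 1) ⟨?_, ?_⟩
  · rw [← hd.1 j, hj]
    exact hc.1 1
  · rw [hd.1 (j + 1), add_assoc, show (1 + 1 : Fin 3) = 2 from rfl, hlast]
    exact (hc.1 2).symm

theorem five_le_card_of_three_cycle [Fintype E] (hni : ¬ HasIsolatedCycle tail head)
    (h2 : ¬ ∃ d : Fin 2 → E, IsElemCycle tail head d) {c : Fin 3 → E}
    (hc : IsElemCycle tail head c) : 5 ≤ Fintype.card E := by
  classical
  by_contra! hE
  obtain ⟨m, d, hd, havoid, -⟩ := exists_avoidsParallel_of_not_hasIsolatedCycle hni hc 2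
  obtain ⟨k, hk⟩ := hc.exists_notMem_range_of_avoidsParallel hd.1 havoid
  obtain rfl : m = 2 := by
    have hc2 : c 2 ∉ Set.range d := fun ⟨k, hk⟩ => havoid.ne k hk
    have := hd.add_two_le_card_of_notMem hc2
    have := hd.two_le (tail_ne_head_of_not_hasIsolatedCycle hni) h2
    omega
  have hcover : ∀ g : E, g = c 0 ∨ g = c 1 ∨ g = c 2 ∨ g = d k := by
    by_contra! ⟨g, hg⟩
    have : 5 ≤ Fintype.card E := List.Nodup.length_le_card (l := [c 0, c 1, c 2, d k, g]) (by
      simp only [Set.mem_range, not_exists] at hk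
      simp [hc.injective.eq_iff, hk, Ne.symm hg.1, Ne.symm hg.2.1, Ne.symm hg.2.2.1,
        Ne.symm hg.2.2.2])
    omega
  refine not_avoidsParallel_of_forall_eq_or_eq_or_eq hc hd (f := d k) (fun i => ?_) havoid
  rcases hcover (d i) with h | h | h | h
  all_goals first | exact absurd h (havoid.ne i) | simp [h]

end ThreeCycles

section Constructions

variable {V E : Type*} {tail head : E → V}

theorem isElemCycle_pair {x y : E} (hxy : head x = tail y) (hyx : head y = tail x)
    (hne : tail x ≠ tail y) : IsElemCycle tail head ![x, y] := by
  refine ⟨fun i => ?_, fun i j h => ?_⟩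
  · fin_cases i <;> assumption
  · fin_cases i <;> fin_cases j <;> simp_all [eq_comm]

theorem isElemCycle_triple {x y z : E} (hxy : head x = tail y) (hyz : head y = tail z)
    (hzx : head z = tail x) (hne₁ : tail x ≠ tail y) (hne₂ : tail x ≠ tail z)
    (hne₃ : tail y ≠ tail z) : IsElemCycle tail head ![x, y, z] := by
  refine ⟨fun i => ?_, fun i j h => ?_⟩
  · fin_cases i <;> assumption
  · fin_cases i <;> fin_cases j <;> simp_all [eq_comm]

end Constructions

def d3Arc (u v : Fin 3) (h : u ≠ v) : D3E := ⟨(u, v), h⟩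

theorem exists_isElemCycle_d3 :
    ∃ (n : ℕ) (c : Fin (n + 1) → D3E), IsElemCycle d3tail d3head c :=
  ⟨1, _, isElemCycle_pair (x := d3Arc 0 1 (by decide)) (y := d3Arc 1 0 (by decide)) rfl rfl
    (by decide)⟩

/-- The arc `c (i + 1)` lies on a cycle avoiding `c i`: a `2`-cycle if it does not lead back to
the tail of `c i`, a triangle through the third vertex otherwise. -/
theorem not_hasIsolatedCycle_d3 : ¬ HasIsolatedCycle d3tail d3head := by
  rintro ⟨n, c, hc, e, hiso⟩
  obtain ⟨i, rfl⟩ := hiso.1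
  refine (not_isolatingArc_iff ⟨i, rfl⟩).2 ?_ hiso
  have hnext : d3tail (c (i + 1)) = d3head (c i) := (hc.1 i).symm
  have hi : d3tail (c i) ≠ d3head (c i) := (c i).2
  have hi' : d3tail (c (i + 1)) ≠ d3head (c (i + 1)) := (c (i + 1)).2
  by_cases hback : d3head (c (i + 1)) = d3tail (c i)
  · obtain ⟨w, hwu, hwv⟩ : ∃ w, w ≠ d3tail (c i) ∧ w ≠ d3head (c i) :=
      (by decide : ∀ u v : Fin 3, ∃ w, w ≠ u ∧ w ≠ v) _ _
    refine ⟨2, _, isElemCycle_triple (x := c (i + 1)) (y := d3Arc _ w hwu.symm)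
      (z := d3Arc w _ hwv) hback rfl hnext.symm ?_ ?_ hwu.symm, ?_, 0, i + 1, rfl⟩
    · rw [hnext]; exact hi.symm
    · rw [hnext]; exact hwv.symm
    · intro k
      fin_cases k
      · exact fun h => hi (h.1.symm.trans hnext)
      · exact fun h => hwv h.2
      · exact fun h => hwu h.1
  · refine ⟨1, _, isElemCycle_pair (x := c (i + 1))
      (y := d3Arc (d3head (c (i + 1))) (d3tail (c (i + 1))) hi'.symm) rfl rfl hi', ?_, 0, i + 1,
      rfl⟩
    intro k
    fin_cases k
    · exact fun h => hi (h.1.symm.trans hnext)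
    · exact fun h => hback h.1

theorem nine_le_card_add_card_of_not_hasIsolatedCycle {V E : Type*} [Fintype V] [Fintype E]
    {tail head : E → V} (hcyc : ∃ (n : ℕ) (c : Fin (n + 1) → E), IsElemCycle tail head c)
    (hni : ¬ HasIsolatedCycle tail head) : 9 ≤ Fintype.card V + Fintype.card E := by
  obtain ⟨n, c, hc⟩ := hcyc
  by_cases h2 : ∃ d : Fin 2 → E, IsElemCycle tail head d
  · obtain ⟨d, hd⟩ := h2
    exact nine_le_card_add_card_of_two_cycle hni hd
  rcases Nat.lt_or_ge n 3 with hn | hn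
  · obtain rfl : n = 2 := le_antisymm (by omega)
      (hc.two_le (tail_ne_head_of_not_hasIsolatedCycle hni) h2)
    have := four_le_card_of_three_cycle hni h2 hc
    have := five_le_card_of_three_cycle hni h2 hc
    omega
  · have := hc.card_le
    have := add_two_le_card_of_not_hasIsolatedCycle hni hc
    omega

/-- Any digraph with at least one directed (elementary) cycle but no isolated cycle
satisfies `|V| + |E| ≥ 9`, and the complete digraph `D₃` (with `|V| = 3`, `|E| = 6`)
attains this bound: it has a cycle but no isolated cycle. -/
theorem smallest_graph_without_isolated_cycles :
    (∀ (V' E' : Type) [Fintype V'] [Fintype E'] (tail head : E' → V'),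
      (∃ (n : ℕ) (c : Fin (n + 1) → E'), IsElemCycle tail head c) →
      ¬ HasIsolatedCycle tail head →
      9 ≤ Fintype.card V' + Fintype.card E') ∧
    Fintype.card (Fin 3) = 3 ∧ Fintype.card D3E = 6 ∧
    (∃ (n : ℕ) (c : Fin (n + 1) → D3E), IsElemCycle d3tail d3head c) ∧
    ¬ HasIsolatedCycle d3tail d3head :=
  ⟨fun _ _ _ _ _ _ => nine_le_card_add_card_of_not_hasIsolatedCycle, Fintype.card_fin 3,
    by decide, exists_isElemCycle_d3, not_hasIsolatedCycle_d3⟩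
end

section
/- For a positively weighted digraph (G,ω) with G = G_o (every arc lies on a directed cycle), the minimum feedback weight satisfies Ω(G,ω) ≥ ⌈ |O_el(G)| / ξ_max ⌉, where ξ_max = max_{e∈E} |O_el(e)| / ω(e). -/
/-- `s` is the arc set of some elementary directed cycle (cycles identified with their
arc sets). -/
def IsElemCycleSet {V E : Type*} [Fintype E] [DecidableEq E] (tail head : E → V)
    (s : Finset E) : Prop :=
  ∃ (n : ℕ) (c : Fin (n + 1) → E), IsElemCycle tail head c ∧ s = Finset.image c Finset.univ

/-- The number of elementary cycles of `G`. -/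
noncomputable def numElemCycles {V E : Type*} [Fintype E] [DecidableEq E]
    (tail head : E → V) : ℕ :=
  Nat.card {s : Finset E // IsElemCycleSet tail head s}

/-- `θ(e)`: the number of elementary cycles through the arc `e`. -/
noncomputable def numElemCyclesThrough {V E : Type*} [Fintype E] [DecidableEq E]
    (tail head : E → V) (e : E) : ℕ :=
  Nat.card {s : Finset E // IsElemCycleSet tail head s ∧ e ∈ s}

/-- For a positively integer-weighted digraph in which every arc lies on an elementary
cycle, every feedback arc set has weight at least `⌈|O_el(G)| / ξ_max⌉`, where
`ξ_max = max_e θ(e)/ω(e)`. -/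
theorem feedback_weight_lower_bound {V E : Type*} [Fintype V] [Fintype E] [DecidableEq E]
    (tail head : E → V) (ω : E → ℕ) (hω : ∀ e, 0 < ω e)
    (hGo : ∀ e : E, ∃ (n : ℕ) (c : Fin (n + 1) → E),
      IsElemCycle tail head c ∧ ∃ i, c i = e)
    (ε : Finset E) (hε : IsFAS tail head ↑ε) :
    ⌈(numElemCycles tail head : ℝ) /
        sSup (Set.range fun e : E =>
          (numElemCyclesThrough tail head e : ℝ) / (ω e : ℝ))⌉
      ≤ ∑ x ∈ ε, (ω x : ℤ) := by
  classical
  set ξ : ℝ := sSup (Set.range fun e : E =>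
      (numElemCyclesThrough tail head e : ℝ) / (ω e : ℝ)) with hξdef
  set T : Finset (Finset E) :=
    Finset.univ.filter (fun s : Finset E => IsElemCycleSet tail head s) with hT
  have hN : numElemCycles tail head = T.card := by
    rw [numElemCycles, Nat.card_eq_fintype_card, Fintype.card_subtype, hT]
  have hθ : ∀ e, numElemCyclesThrough tail head e
      = (T.filter (fun s => e ∈ s)).card := by
    intro e
    rw [numElemCyclesThrough, Nat.card_eq_fintype_card, Fintype.card_subtype, hT,
      Finset.filter_filter]
  -- every elementary cycle set meets ε
  have hmeet : ∀ s ∈ T, ∃ e ∈ ε, e ∈ s := by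
    intro s hs
    rw [hT, Finset.mem_filter] at hs
    obtain ⟨-, n, c, hc, rfl⟩ := hs
    by_contra h
    push_neg at h
    exact hε ⟨n, c, hc.1, fun i => fun hi => h (c i) hi
      (Finset.mem_image_of_mem c (Finset.mem_univ i))⟩
  have hsub : T ⊆ ε.biUnion (fun e => T.filter (fun s => e ∈ s)) := by
    intro s hs
    obtain ⟨e, he, hes⟩ := hmeet s hs
    exact Finset.mem_biUnion.mpr ⟨e, he, Finset.mem_filter.mpr ⟨hs, hes⟩⟩
  have key : numElemCycles tail head ≤ ∑ e ∈ ε, numElemCyclesThrough tail head e := by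
    rw [hN]
    calc T.card ≤ (ε.biUnion (fun e => T.filter (fun s => e ∈ s))).card :=
          Finset.card_le_card hsub
      _ ≤ ∑ e ∈ ε, (T.filter (fun s => e ∈ s)).card := Finset.card_biUnion_le
      _ = ∑ e ∈ ε, numElemCyclesThrough tail head e := by simp [hθ]
  have hbdd : BddAbove (Set.range fun e : E =>
      (numElemCyclesThrough tail head e : ℝ) / (ω e : ℝ)) :=
    (Set.finite_range _).bddAbove
  have hle : ∀ e : E, (numElemCyclesThrough tail head e : ℝ) ≤ ξ * (ω e : ℝ) := by
    intro e
    have h1 : (numElemCyclesThrough tail head e : ℝ) / (ω e : ℝ) ≤ ξ :=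
      le_csSup hbdd ⟨e, rfl⟩
    have hω' : (0 : ℝ) < (ω e : ℝ) := by exact_mod_cast hω e
    calc (numElemCyclesThrough tail head e : ℝ)
        = ((numElemCyclesThrough tail head e : ℝ) / (ω e : ℝ)) * (ω e : ℝ) := by
          field_simp
      _ ≤ ξ * (ω e : ℝ) := by
          exact mul_le_mul_of_nonneg_right h1 hω'.le
  have hsum : (numElemCycles tail head : ℝ) ≤ ξ * ∑ e ∈ ε, (ω e : ℝ) := by
    calc (numElemCycles tail head : ℝ)
        ≤ ∑ e ∈ ε, (numElemCyclesThrough tail head e : ℝ) := by exact_mod_cast key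
      _ ≤ ∑ e ∈ ε, ξ * (ω e : ℝ) := Finset.sum_le_sum fun e _ => hle e
      _ = ξ * ∑ e ∈ ε, (ω e : ℝ) := by rw [Finset.mul_sum]
  rcases Nat.eq_zero_or_pos (numElemCycles tail head) with h0 | hpos
  · rw [h0]
    simp only [Nat.cast_zero, zero_div, Int.ceil_zero]
    exact Finset.sum_nonneg fun e _ => by positivity
  · -- some e ∈ ε has positive θ, hence ξ > 0
    have hNpos : (0 : ℕ) < ∑ e ∈ ε, numElemCyclesThrough tail head e :=
      lt_of_lt_of_le hpos key
    obtain ⟨e, he, hepos⟩ : ∃ e ∈ ε, 0 < numElemCyclesThrough tail head e := by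
      by_contra h
      push_neg at h
      have : ∑ e ∈ ε, numElemCyclesThrough tail head e = 0 :=
        Finset.sum_eq_zero fun e he => Nat.le_zero.mp (h e he)
      omega
    have hξpos : 0 < ξ := by
      have hω' : (0 : ℝ) < (ω e : ℝ) := by exact_mod_cast hω e
      have : (0 : ℝ) < (numElemCyclesThrough tail head e : ℝ) / (ω e : ℝ) := by
        apply div_pos _ hω'
        exact_mod_cast hepos
      exact lt_of_lt_of_le this (le_csSup hbdd ⟨e, rfl⟩)
    rw [Int.ceil_le]
    rw [div_le_iff₀ hξpos]
    push_cast
    calc (numElemCycles tail head : ℝ) ≤ ξ * ∑ e ∈ ε, (ω e : ℝ) := hsum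
      _ = (∑ e ∈ ε, (ω e : ℝ)) * ξ := mul_comm _ _
end

section
/- Let (G,ω) be a positively weighted digraph with G = G_o, let ε be the feedback arc set output by GREEDY-CUT, and let θ_max = max_e |O_el(e)|. Then Ω(G,ω)/Ω_{G,ω}(ε) ≥ ω_min / (ω_max · θ_max), where ω_min, ω_max are the minimum and maximum arc weights and Ω_{G,ω}(ε) is the total weight of ε. -/
/-- The subgraph with arc set `s` has a directed cycle. -/
def HasCycleIn {V E : Type*} (tail head : E → V) (s : Finset E) : Prop :=
  ∃ (n : ℕ) (c : Fin (n + 1) → E), IsCycle tail head c ∧ ∀ i, c i ∈ s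

/-- `θ_s(f)`: number of elementary cycles lying in the subgraph `s` through `f`. -/
noncomputable def numElemCyclesThroughIn {V E : Type*} [Fintype E] [DecidableEq E]
    (tail head : E → V) (s : Finset E) (f : E) : ℕ :=
  Nat.card {t : Finset E // IsElemCycleSet tail head t ∧ t ⊆ s ∧ f ∈ t}

/-- GREEDY-CUT (weighted): while the current subgraph `s` has a cycle, remove an arc
maximizing the efficient weight `ξ(e) = θ_s(e)/ω(e)`. -/
inductive IsGreedyOutputW {V E : Type*} [Fintype E] [DecidableEq E]
    (tail head : E → V) (ω : E → ℕ) : Finset E → Finset E → Prop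
  | done (s : Finset E) (h : ¬ HasCycleIn tail head s) : IsGreedyOutputW tail head ω s ∅
  | step (s : Finset E) (e : E) (ε : Finset E)
      (hcyc : HasCycleIn tail head s) (he : e ∈ s)
      (hmax : ∀ f ∈ s, (numElemCyclesThroughIn tail head s f : ℝ) / (ω f : ℝ) ≤
        (numElemCyclesThroughIn tail head s e : ℝ) / (ω e : ℝ))
      (h : IsGreedyOutputW tail head ω (s.erase e) ε) :
      IsGreedyOutputW tail head ω s (insert e ε)

section Aux

variable {V E : Type*} [Fintype E] [DecidableEq E] {tail head : E → V}

lemma cycle_trim (tail head : E → V) (n : ℕ) :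
    ∀ (c : Fin (n + 1) → E), IsCycle tail head c →
    ∃ (m : ℕ) (c' : Fin (m + 1) → E), IsElemCycle tail head c' ∧ ∀ k, ∃ i, c' k = c i := by
  induction n using Nat.strong_induction_on with
  | _ n ih =>
  intro c hc
  by_cases hinj : Function.Injective (fun i : Fin (n+1) => tail (c i))
  · exact ⟨n, c, ⟨hc, hinj⟩, fun k => ⟨k, rfl⟩⟩
  · rw [Function.not_injective_iff] at hinj
    obtain ⟨i, j, hij, hne⟩ := hinj
    have key : ∃ a b : Fin (n+1), a.val < b.val ∧ tail (c a) = tail (c b) := by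
      rcases Nat.lt_or_ge i.val j.val with h | h
      · exact ⟨i, j, h, hij⟩
      · refine ⟨j, i, ?_, hij.symm⟩
        rcases Nat.lt_or_ge j.val i.val with h' | h'
        · exact h'
        · exact absurd (Fin.ext (le_antisymm h h')).symm hne
    obtain ⟨a, b, hab, hteq⟩ := key
    have hbn : b.val < n + 1 := b.isLt
    have hmn : b.val - a.val - 1 < n := by omega
    set m := b.val - a.val - 1 with hm
    have hidx : ∀ k : Fin (m+1), a.val + k.val < n + 1 := by
      intro k; have := k.isLt; omega
    have step : IsCycle tail head (fun k => c ⟨a.val + k.val, hidx k⟩) := ?_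
    · obtain ⟨m', c', hel, hsub⟩ := ih m hmn _ step
      exact ⟨m', c', hel, fun k => by obtain ⟨i, hi⟩ := hsub k; exact ⟨_, hi⟩⟩
    intro k
    have hk := k.isLt
    show head (c ⟨a.val + k.val, hidx k⟩) = tail (c ⟨a.val + ((k+1 : Fin (m+1))).val, hidx _⟩)
    rw [hc ⟨a.val + k.val, hidx k⟩]
    have hval : ((k+1 : Fin (m+1))).val = (k.val + 1 % (m+1)) % (m+1) := by
      rw [Fin.val_add, Fin.val_one']
    have hval2 : ((⟨a.val + k.val, hidx k⟩ + 1 : Fin (n+1))).val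
        = (a.val + k.val + 1 % (n+1)) % (n+1) := by
      rw [Fin.val_add, Fin.val_one']
    have hn1 : 1 % (n+1) = 1 := Nat.mod_eq_of_lt (by omega)
    have h2 : ((⟨a.val + k.val, hidx k⟩ + 1 : Fin (n+1))).val = a.val + k.val + 1 := by
      rw [hval2, hn1]
      exact Nat.mod_eq_of_lt (by omega)
    by_cases hkm : k.val < m
    · have h1 : ((k+1 : Fin (m+1))).val = k.val + 1 := by
        rw [hval, Nat.mod_eq_of_lt (show (1:ℕ) < m+1 by omega),
          Nat.mod_eq_of_lt (by omega)]
      exact congrArg (fun x => tail (c x)) (Fin.ext (by simp only [Fin.val_mk]; omega))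
    · have hkm' : k.val = m := by omega
      have h1 : ((k+1 : Fin (m+1))).val = 0 := by
        rw [hval]
        rcases Nat.eq_zero_or_pos m with h0 | h0
        · simp [h0, hkm']
        · rw [Nat.mod_eq_of_lt (show (1:ℕ) < m+1 by omega), hkm', Nat.mod_self]
      have hb2 : (⟨a.val + k.val, hidx k⟩ + 1 : Fin (n+1)) = b := Fin.ext (by rw [h2]; omega)
      rw [hb2, ← hteq]
      exact congrArg (fun x => tail (c x)) (Fin.ext (by simp only [Fin.val_mk]; omega))

lemma hasCycle_elemset {s : Finset E} (h : HasCycleIn tail head s) :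
    ∃ t, IsElemCycleSet tail head t ∧ t ⊆ s ∧ t.Nonempty := by
  obtain ⟨n, c, hc, hmem⟩ := h
  obtain ⟨m, c', hel, hsub⟩ := cycle_trim tail head n c hc
  refine ⟨Finset.image c' Finset.univ, ⟨m, c', hel, rfl⟩, ?_,
    ⟨c' 0, Finset.mem_image_of_mem _ (Finset.mem_univ 0)⟩⟩
  intro x hx
  simp only [Finset.mem_image, Finset.mem_univ, true_and] at hx
  obtain ⟨k, rfl⟩ := hx
  obtain ⟨i, hi⟩ := hsub k
  rw [hi]; exact hmem i

lemma nat_card_subtype_eq (p : Finset E → Prop) [DecidablePred p] :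
    Nat.card {t : Finset E // p t} = (Finset.univ.filter p).card := by
  classical
  rw [Nat.card_eq_fintype_card, Fintype.card_subtype]

lemma greedy_card (ω : E → ℕ) (hω : ∀ e, 0 < ω e) {s ε : Finset E}
    (hg : IsGreedyOutputW tail head ω s ε) :
    ε.card ≤ Nat.card {t : Finset E // IsElemCycleSet tail head t ∧ t ⊆ s} := by
  induction hg with
  | done s h => simp
  | step s e ε hcyc he hmax h ih =>
    obtain ⟨t₁, ht₁, ht₁s, hne⟩ := hasCycle_elemset hcyc
    obtain ⟨f, hf⟩ := hne
    have hθf : 0 < numElemCyclesThroughIn tail head s f := by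
      have : Nonempty {t : Finset E // IsElemCycleSet tail head t ∧ t ⊆ s ∧ f ∈ t} :=
        ⟨⟨t₁, ht₁, ht₁s, hf⟩⟩
      exact Nat.card_pos
    have hθe : 0 < numElemCyclesThroughIn tail head s e := by
      by_contra h0
      have h0 : numElemCyclesThroughIn tail head s e = 0 := by omega
      have hle := hmax f (ht₁s hf)
      rw [h0] at hle
      have hpos : (0:ℝ) < (numElemCyclesThroughIn tail head s f : ℝ) / (ω f : ℝ) :=
        div_pos (by exact_mod_cast hθf) (by exact_mod_cast hω f)
      simp only [Nat.cast_zero, zero_div] at hle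
      linarith
    have hne2 : Nonempty {t : Finset E // IsElemCycleSet tail head t ∧ t ⊆ s ∧ e ∈ t} := by
      by_contra hcon
      rw [not_nonempty_iff] at hcon
      rw [numElemCyclesThroughIn, Nat.card_of_isEmpty] at hθe
      exact absurd hθe (lt_irrefl 0)
    obtain ⟨⟨t₀, ht₀, ht₀s, het₀⟩⟩ := hne2
    have hkey : Nat.card {t : Finset E // IsElemCycleSet tail head t ∧ t ⊆ s.erase e} + 1
        ≤ Nat.card {t : Finset E // IsElemCycleSet tail head t ∧ t ⊆ s} := by
      have e1 : Nat.card {t : Finset E // IsElemCycleSet tail head t ∧ t ⊆ s.erase e}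
          = ({t : Finset E | IsElemCycleSet tail head t ∧ t ⊆ s.erase e}).ncard :=
        (Nat.card_coe_set_eq _).symm ▸ rfl
      have e2 : Nat.card {t : Finset E // IsElemCycleSet tail head t ∧ t ⊆ s}
          = ({t : Finset E | IsElemCycleSet tail head t ∧ t ⊆ s}).ncard :=
        (Nat.card_coe_set_eq _).symm ▸ rfl
      rw [e1, e2]
      have hss : {t : Finset E | IsElemCycleSet tail head t ∧ t ⊆ s.erase e}
          ⊂ {t : Finset E | IsElemCycleSet tail head t ∧ t ⊆ s} := by
        constructor
        · intro t ht
          exact ⟨ht.1, ht.2.trans (Finset.erase_subset _ _)⟩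
        · intro hcon
          have := hcon ⟨ht₀, ht₀s⟩
          exact (Finset.mem_erase.mp (this.2 het₀)).1 rfl
      exact Set.ncard_lt_ncard hss (Set.toFinite _)
    calc (insert e ε).card ≤ ε.card + 1 := Finset.card_insert_le _ _
      _ ≤ Nat.card {t : Finset E // IsElemCycleSet tail head t ∧ t ⊆ s.erase e} + 1 := by
          omega
      _ ≤ _ := hkey

lemma fas_meets {ε' : Finset E} (hfas : IsFAS tail head ↑ε') {t : Finset E}
    (ht : IsElemCycleSet tail head t) : ∃ f ∈ ε', f ∈ t := by
  by_contra hcon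
  push_neg at hcon
  obtain ⟨n, c, ⟨hc, -⟩, rfl⟩ := ht
  exact hfas ⟨n, c, hc, fun i hi =>
    hcon _ hi (Finset.mem_image_of_mem _ (Finset.mem_univ i))⟩

lemma fas_count {ε' : Finset E} (hfas : IsFAS tail head ↑ε') :
    Nat.card {t : Finset E // IsElemCycleSet tail head t ∧ t ⊆ (Finset.univ : Finset E)}
      ≤ ∑ f ∈ ε', numElemCyclesThroughIn tail head Finset.univ f := by
  classical
  rw [nat_card_subtype_eq]
  have hsum : ∀ f, numElemCyclesThroughIn tail head Finset.univ f
      = (Finset.univ.filter (fun t : Finset E =>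
          IsElemCycleSet tail head t ∧ t ⊆ Finset.univ ∧ f ∈ t)).card := by
    intro f; rw [numElemCyclesThroughIn, nat_card_subtype_eq]
  simp only [hsum]
  refine le_trans (Finset.card_le_card ?_) (Finset.card_biUnion_le)
  intro t ht
  simp only [Finset.mem_filter, Finset.mem_univ, true_and] at ht
  obtain ⟨f, hf, hft⟩ := fas_meets hfas ht.1
  rw [Finset.mem_biUnion]
  exact ⟨f, hf, by simp [ht.1, ht.2, hft]⟩

end Aux

/-- Approximation ratio -/
theorem greedy_approx_ratio {V E : Type*} [Fintype E] [DecidableEq E] [Nonempty E]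
    (tail head : E → V) (ω : E → ℕ) (hω : ∀ e, 0 < ω e)
    (hGo : ∀ e : E, ∃ (n : ℕ) (c : Fin (n + 1) → E),
      IsElemCycle tail head c ∧ ∃ i, c i = e)
    (ε : Finset E) (hgreedy : IsGreedyOutputW tail head ω Finset.univ ε)
    (ε' : Finset E) (hopt : IsFAS tail head ↑ε' ∧
      ∀ ε'' : Finset E, IsFAS tail head ↑ε'' → ∑ x ∈ ε', ω x ≤ ∑ x ∈ ε'', ω x) :
    (Finset.univ.inf' Finset.univ_nonempty fun e : E => (ω e : ℝ)) /
        ((Finset.univ.sup' Finset.univ_nonempty fun e : E => (ω e : ℝ)) *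
          (Finset.univ.sup' Finset.univ_nonempty fun e : E =>
            (numElemCyclesThroughIn tail head Finset.univ e : ℝ)))
      ≤ (∑ x ∈ ε', (ω x : ℝ)) / ∑ x ∈ ε, (ω x : ℝ) := by
  set a := Finset.univ.inf' Finset.univ_nonempty fun e : E => (ω e : ℝ) with ha
  set b := Finset.univ.sup' Finset.univ_nonempty fun e : E => (ω e : ℝ) with hb
  set θ := Finset.univ.sup' Finset.univ_nonempty fun e : E =>
      (numElemCyclesThroughIn tail head Finset.univ e : ℝ) with hθ
  -- basic positivity
  have ha_pos : 0 < a := by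
    rw [ha, Finset.lt_inf'_iff]
    intro e _; exact_mod_cast hω e
  have hab : a ≤ b := by
    obtain ⟨e⟩ : Nonempty E := inferInstance
    rw [ha, hb]
    exact le_trans (Finset.inf'_le _ (Finset.mem_univ e))
      (Finset.le_sup' (fun e : E => (ω e : ℝ)) (Finset.mem_univ e))
  have hb_pos : 0 < b := lt_of_lt_of_le ha_pos hab
  -- every arc is on an elementary cycle set
  have hθe : ∀ e : E, 0 < numElemCyclesThroughIn tail head Finset.univ e := by
    intro e
    obtain ⟨n, c, hel, i, hie⟩ := hGo e
    have : Nonempty {t : Finset E // IsElemCycleSet tail head t ∧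
        t ⊆ Finset.univ ∧ e ∈ t} :=
      ⟨⟨Finset.image c Finset.univ, ⟨n, c, hel, rfl⟩, Finset.subset_univ _,
        hie ▸ Finset.mem_image_of_mem _ (Finset.mem_univ i)⟩⟩
    exact Nat.card_pos
  have hθ_pos : 0 < θ := by
    obtain ⟨e⟩ : Nonempty E := inferInstance
    rw [hθ]
    refine lt_of_lt_of_le ?_
      (Finset.le_sup' (fun e : E => (numElemCyclesThroughIn tail head Finset.univ e : ℝ))
        (Finset.mem_univ e))
    exact_mod_cast hθe e
  -- univ has a cycle
  have huniv : HasCycleIn tail head (Finset.univ : Finset E) := by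
    obtain ⟨e⟩ : Nonempty E := inferInstance
    obtain ⟨n, c, hel, -⟩ := hGo e
    exact ⟨n, c, hel.1, fun i => Finset.mem_univ _⟩
  -- ε nonempty
  have hεne : ε.Nonempty := by
    cases hgreedy with
    | done _ h => exact absurd huniv h
    | step s e ε hcyc he hmax h => exact ⟨e, Finset.mem_insert_self _ _⟩
  -- ε' nonempty
  have hε'ne : ε'.Nonempty := by
    rcases Finset.eq_empty_or_nonempty ε' with rfl | h
    · exfalso
      obtain ⟨n, c, hc, hmem⟩ := huniv
      exact hopt.1 ⟨n, c, hc, fun i => by simp⟩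
    · exact h
  have hB_pos : (0:ℝ) < ∑ x ∈ ε, (ω x : ℝ) := by
    refine Finset.sum_pos (fun x _ => by exact_mod_cast hω x) hεne
  have hA_pos : (0:ℝ) < ∑ x ∈ ε', (ω x : ℝ) := by
    refine Finset.sum_pos (fun x _ => by exact_mod_cast hω x) hε'ne
  rw [div_le_div_iff₀ (by positivity) hB_pos]
  -- key card bounds
  have hcard1 : ε.card ≤ Nat.card {t : Finset E // IsElemCycleSet tail head t ∧
      t ⊆ (Finset.univ : Finset E)} := greedy_card ω hω hgreedy
  have hcard2 := fas_count (tail := tail) (head := head) hopt.1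
  have hcardR : (ε.card : ℝ) ≤ (ε'.card : ℝ) * θ := by
    have h1 : (ε.card : ℝ) ≤ ∑ f ∈ ε', (numElemCyclesThroughIn tail head Finset.univ f : ℝ) := by
      have := le_trans hcard1 hcard2
      exact_mod_cast this
    refine le_trans h1 ?_
    have h2 : ∑ f ∈ ε', (numElemCyclesThroughIn tail head Finset.univ f : ℝ)
        ≤ ∑ _f ∈ ε', θ := by
      refine Finset.sum_le_sum fun f _ => ?_
      rw [hθ]
      exact Finset.le_sup' (fun e : E => (numElemCyclesThroughIn tail head Finset.univ e : ℝ))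
        (Finset.mem_univ f)
    simpa [mul_comm] using h2
  have hBle : ∑ x ∈ ε, (ω x : ℝ) ≤ (ε.card : ℝ) * b := by
    have := Finset.sum_le_card_nsmul ε (fun x => (ω x : ℝ)) b
      (fun x _ => by rw [hb]; exact Finset.le_sup' (fun e : E => (ω e : ℝ)) (Finset.mem_univ x))
    simpa [nsmul_eq_mul] using this
  have hAge : (ε'.card : ℝ) * a ≤ ∑ x ∈ ε', (ω x : ℝ) := by
    have := Finset.card_nsmul_le_sum ε' (fun x => (ω x : ℝ)) a
      (fun x _ => by rw [ha]; exact Finset.inf'_le (fun e : E => (ω e : ℝ)) (Finset.mem_univ x))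
    simpa [nsmul_eq_mul] using this
  have hεc : (0:ℝ) ≤ (ε.card : ℝ) := Nat.cast_nonneg _
  nlinarith [mul_le_mul_of_nonneg_left hBle ha_pos.le,
    mul_le_mul_of_nonneg_right hcardR (mul_pos ha_pos hb_pos).le,
    mul_le_mul_of_nonneg_right hAge (mul_pos hb_pos hθ_pos).le]
end
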